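/- arXiv:2404.17789 — 2 statements merged into one kernel-verified Lean document; each statement's English description precedes it below -/
import Mathlib

section
/- With u as in the previous statement (the solution of u'' = μu on (0,z)∪(z,1), u(0)=u(1)=0, jump u'(z⁺)−u'(z⁻) = −λ with λ > 0), u is strictly positive on (0,1) and ∫₀¹ u(x) dx = (λ/μ)·(1 − (sinh(√μ z) + sinh(√μ(1−z)))/sinh(√μ)). -/
/-!
Write `s = √μ`. On each side of `z` the combinations `e^{∓sx}(u' ± s u)` have zero derivative,
so `u` is a combination of `e^{sx}` and `e^{-sx}` there; with the zero boundary values this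
gives `u x = u z · sinh (s x) / sinh (s z)` on `[0, z]` and
`u x = u z · sinh (s (1 - x)) / sinh (s (1 - z))` on `[z, 1]`. The jump condition then forces
`u z = λ sinh (s z) sinh (s (1 - z)) / (s sinh s) > 0`, and the integral follows from
`sinh s = sinh (s z) cosh (s (1 - z)) + cosh (s z) sinh (s (1 - z))`.
-/

open Real Set Filter

theorem exists_is_const_exp_neg_mul_mul_deriv_add {f : ℝ → ℝ} {t a b : ℝ}
    (hf : ContDiffOn ℝ 2 f (Ioo a b))
    (hode : ∀ x ∈ Ioo a b, deriv (deriv f) x = t ^ 2 * f x) :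
    ∃ C, ∀ x ∈ Ioo a b, exp (-(t * x)) * (deriv f x + t * f x) = C := by
  have hf' : ContDiffOn ℝ 1 (deriv f) (Ioo a b) := hf.deriv_of_isOpen isOpen_Ioo (by norm_num)
  have hderiv : ∀ x ∈ Ioo a b,
      HasDerivAt (fun x => exp (-(t * x)) * (deriv f x + t * f x)) 0 x := by
    intro x hx
    have hdf := ((hf.differentiableOn (by norm_num)).differentiableAt
      (isOpen_Ioo.mem_nhds hx)).hasDerivAt
    have hdf' := ((hf'.differentiableOn one_ne_zero).differentiableAt
      (isOpen_Ioo.mem_nhds hx)).hasDerivAt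
    refine ((((hasDerivAt_id' x).const_mul t).neg.exp).mul
      (hdf'.add (hdf.const_mul t))).congr_deriv ?_
    simp only [Pi.neg_apply, Pi.add_apply, hode x hx]
    ring
  exact isOpen_Ioo.exists_is_const_of_deriv_eq_zero isPreconnected_Ioo
    (fun x hx => (hderiv x hx).differentiableAt.differentiableWithinAt)
    (fun x hx => (hderiv x hx).deriv)

theorem exists_eqOn_exp_combination {f : ℝ → ℝ} {s a b : ℝ} (hs : s ≠ 0)
    (hf : ContDiffOn ℝ 2 f (Ioo a b))
    (hode : ∀ x ∈ Ioo a b, deriv (deriv f) x = s ^ 2 * f x) :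
    ∃ α β : ℝ, EqOn f (fun x => α * exp (s * x) + β * exp (-(s * x))) (Ioo a b) := by
  obtain ⟨V, hV⟩ := exists_is_const_exp_neg_mul_mul_deriv_add hf hode
  obtain ⟨W, hW⟩ :=
    exists_is_const_exp_neg_mul_mul_deriv_add (t := -s) hf (by simpa only [neg_sq])
  refine ⟨V / (2 * s), -W / (2 * s), fun x hx => ?_⟩
  have hVx := hV x hx
  have hWx := hW x hx
  simp only [neg_mul, neg_neg] at hWx
  have hexp : exp (-(s * x)) * exp (s * x) = 1 := by rw [← exp_add, neg_add_cancel, exp_zero]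
  rw [← hVx, ← hWx]
  field_simp
  linear_combination (-2 * s * f x) * hexp

theorem exp_mul_mul_sinh_sub (s a b x : ℝ) :
    exp (s * x) * sinh (s * (b - a)) =
      exp (s * a) * sinh (s * (b - x)) + exp (s * b) * sinh (s * (x - a)) := by
  simp only [mul_sub, sinh_eq, exp_sub, exp_neg]
  field_simp
  ring

theorem eqOn_sinh_interpolation {f : ℝ → ℝ} {s a b : ℝ} (hs : s ≠ 0) (hab : a < b)
    (hf : ContDiffOn ℝ 2 f (Icc a b))
    (hode : ∀ x ∈ Ioo a b, deriv (deriv f) x = s ^ 2 * f x) :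
    EqOn f (fun x => (f a * sinh (s * (b - x)) + f b * sinh (s * (x - a))) / sinh (s * (b - a)))
      (Icc a b) := by
  obtain ⟨α, β, hαβ⟩ := exists_eqOn_exp_combination hs (hf.mono Ioo_subset_Icc_self) hode
  have hfF : EqOn f (fun x => α * exp (s * x) + β * exp (-(s * x))) (Icc a b) :=
    hαβ.of_subset_closure hf.continuousOn (by fun_prop) Ioo_subset_Icc_self
      (closure_Ioo hab.ne).superset
  have hsinh : sinh (s * (b - a)) ≠ 0 := sinh_ne_zero.2 (mul_ne_zero hs (sub_ne_zero.2 hab.ne'))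
  intro x hx
  have hpos := exp_mul_mul_sinh_sub s a b x
  have hneg := exp_mul_mul_sinh_sub (-s) a b x
  simp only [neg_mul, sinh_neg] at hneg
  rw [eq_div_iff hsinh, hfF hx, hfF ⟨le_rfl, hab.le⟩, hfF ⟨hab.le, le_rfl⟩]
  linear_combination α * hpos - β * hneg

theorem derivWithin_Iic_eq_of_eqOn {f g : ℝ → ℝ} {a b g' : ℝ} (hab : a < b)
    (hfg : EqOn f g (Icc a b)) (hg : HasDerivAt g g' b) : derivWithin f (Iic b) b = g' :=
  (hg.hasDerivWithinAt.congr_of_eventuallyEq (eventuallyEq_of_mem (Icc_mem_nhdsLE hab) hfg)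
    (hfg ⟨hab.le, le_rfl⟩)).derivWithin (uniqueDiffWithinAt_Iic b)

theorem derivWithin_Ici_eq_of_eqOn {f g : ℝ → ℝ} {a b g' : ℝ} (hab : a < b)
    (hfg : EqOn f g (Icc a b)) (hg : HasDerivAt g g' a) : derivWithin f (Ici a) a = g' :=
  (hg.hasDerivWithinAt.congr_of_eventuallyEq (eventuallyEq_of_mem (Icc_mem_nhdsGE hab) hfg)
    (hfg ⟨le_rfl, hab.le⟩)).derivWithin (uniqueDiffWithinAt_Ici a)

theorem integral_sinh_mul {s : ℝ} (hs : s ≠ 0) (t : ℝ) :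
    ∫ x in (0 : ℝ)..t, sinh (s * x) = (cosh (s * t) - 1) / s := by
  have hderiv (x : ℝ) : HasDerivAt (fun x => cosh (s * x) / s) (sinh (s * x)) x := by
    refine ((((hasDerivAt_id' x).const_mul s).cosh).div_const s).congr_deriv ?_
    field_simp
  rw [intervalIntegral.integral_eq_sub_of_hasDerivAt (fun x _ => hderiv x)
    ((by fun_prop : Continuous fun x => sinh (s * x)).intervalIntegrable _ _),
    mul_zero, cosh_zero, sub_div]

theorem sinh_eq_sinh_mul_add_mul_one_sub (s z : ℝ) :
    sinh s = sinh (s * z) * cosh (s * (1 - z)) + cosh (s * z) * sinh (s * (1 - z)) := by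
  rw [← sinh_add]; ring_nf

section SinhPieces

variable {s z : ℝ} {u : ℝ → ℝ}

theorem derivWithin_Ici_sub_derivWithin_Iic_of_sinh_pieces (hs : s ≠ 0) (hz : z ∈ Ioo 0 1)
    (hl : EqOn u (fun x => u z * sinh (s * x) / sinh (s * z)) (Icc 0 z))
    (hr : EqOn u (fun x => u z * sinh (s * (1 - x)) / sinh (s * (1 - z))) (Icc z 1)) :
    derivWithin u (Ici z) z - derivWithin u (Iic z) z =
      -(s * sinh s / (sinh (s * z) * sinh (s * (1 - z)))) * u z := by
  have hderivl : HasDerivAt (fun x => u z * sinh (s * x) / sinh (s * z))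
      (u z * (cosh (s * z) * s) / sinh (s * z)) z :=
    ((hasDerivAt_const_mul s).sinh.const_mul (u z)).div_const _
  have hderivr : HasDerivAt (fun x => u z * sinh (s * (1 - x)) / sinh (s * (1 - z)))
      (u z * (cosh (s * (1 - z)) * (s * -1)) / sinh (s * (1 - z))) z :=
    ((((hasDerivAt_id' z).const_sub 1).const_mul s).sinh.const_mul (u z)).div_const _
  rw [derivWithin_Ici_eq_of_eqOn hz.2 hr hderivr, derivWithin_Iic_eq_of_eqOn hz.1 hl hderivl,
    sinh_eq_sinh_mul_add_mul_one_sub s z]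
  have : sinh (s * z) ≠ 0 := sinh_ne_zero.2 (mul_ne_zero hs hz.1.ne')
  have : sinh (s * (1 - z)) ≠ 0 := sinh_ne_zero.2 (mul_ne_zero hs (sub_ne_zero.2 hz.2.ne'))
  field_simp
  ring

theorem integral_of_sinh_pieces (hs : s ≠ 0) (hz : z ∈ Ioo 0 1)
    (hl : EqOn u (fun x => u z * sinh (s * x) / sinh (s * z)) (Icc 0 z))
    (hr : EqOn u (fun x => u z * sinh (s * (1 - x)) / sinh (s * (1 - z))) (Icc z 1)) :
    ∫ x in (0 : ℝ)..1, u x =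
      u z / s * ((cosh (s * z) - 1) / sinh (s * z) +
        (cosh (s * (1 - z)) - 1) / sinh (s * (1 - z))) := by
  have hl' : EqOn u _ (uIcc 0 z) := uIcc_of_le hz.1.le ▸ hl
  have hr' : EqOn u _ (uIcc z 1) := uIcc_of_le hz.2.le ▸ hr
  rw [← intervalIntegral.integral_add_adjacent_intervals
      (((by fun_prop : Continuous _).continuousOn.congr hl').intervalIntegrable)
      (((by fun_prop : Continuous _).continuousOn.congr hr').intervalIntegrable),
    intervalIntegral.integral_congr hl', intervalIntegral.integral_congr hr']
  simp only [intervalIntegral.integral_div, intervalIntegral.integral_const_mul,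
    intervalIntegral.integral_comp_sub_left (fun x => sinh (s * x)), sub_self, integral_sinh_mul hs]
  ring

theorem pos_of_sinh_pieces (hs : 0 < s)
    (hl : EqOn u (fun x => u z * sinh (s * x) / sinh (s * z)) (Icc 0 z))
    (hr : EqOn u (fun x => u z * sinh (s * (1 - x)) / sinh (s * (1 - z))) (Icc z 1))
    (huz : 0 < u z) {x : ℝ} (hx : x ∈ Ioo 0 1) : 0 < u x := by
  have hsinh {y : ℝ} (hy : 0 < y) : 0 < sinh (s * y) := sinh_pos_iff.2 (mul_pos hs hy)
  rcases le_total x z with hxz | hzx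
  · rw [hl ⟨hx.1.le, hxz⟩]
    exact div_pos (mul_pos huz (hsinh hx.1)) (hsinh (hx.1.trans_le hxz))
  · rw [hr ⟨hzx, hx.2.le⟩]
    exact div_pos (mul_pos huz (hsinh (sub_pos.2 hx.2))) (hsinh (sub_pos.2 (hzx.trans_lt hx.2)))

end SinhPieces

theorem stmt10_general (μ lam z : ℝ) (hμ : 0 < μ) (hlam : 0 < lam)
    (hz : z ∈ Set.Ioo (0:ℝ) 1)
    (u : ℝ → ℝ)
    (hC2l : ContDiffOn ℝ 2 u (Set.Icc 0 z))
    (hC2r : ContDiffOn ℝ 2 u (Set.Icc z 1))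
    (hode1 : ∀ x ∈ Set.Ioo 0 z, deriv (deriv u) x - μ * u x = 0)
    (hode2 : ∀ x ∈ Set.Ioo z 1, deriv (deriv u) x - μ * u x = 0)
    (hb0 : u 0 = 0) (hb1 : u 1 = 0)
    (hjump : derivWithin u (Set.Ici z) z - derivWithin u (Set.Iic z) z = -lam) :
    (∀ x ∈ Set.Ioo (0:ℝ) 1, 0 < u x) ∧
    ∫ x in (0:ℝ)..1, u x =
      (lam / μ) * (1 - (Real.sinh (Real.sqrt μ * z) + Real.sinh (Real.sqrt μ * (1 - z))) /
        Real.sinh (Real.sqrt μ)) := by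
  set s := √μ
  have hs : 0 < s := sqrt_pos.2 hμ
  have hμs : μ = s ^ 2 := (sq_sqrt hμ.le).symm
  have hl : EqOn u (fun x => u z * sinh (s * x) / sinh (s * z)) (Icc 0 z) := by
    simpa [hb0] using eqOn_sinh_interpolation hs.ne' hz.1 hC2l
      fun x hx => by linarith [hμs ▸ hode1 x hx]
  have hr : EqOn u (fun x => u z * sinh (s * (1 - x)) / sinh (s * (1 - z))) (Icc z 1) := by
    simpa [hb1] using eqOn_sinh_interpolation hs.ne' hz.2 hC2r
      fun x hx => by linarith [hμs ▸ hode2 x hx]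
  have hA : 0 < sinh (s * z) := sinh_pos_iff.2 (mul_pos hs hz.1)
  have hB : 0 < sinh (s * (1 - z)) := sinh_pos_iff.2 (mul_pos hs (sub_pos.2 hz.2))
  have hS : 0 < sinh s := sinh_pos_iff.2 hs
  have huz : u z = lam * sinh (s * z) * sinh (s * (1 - z)) / (s * sinh s) := by
    rw [derivWithin_Ici_sub_derivWithin_Iic_of_sinh_pieces hs.ne' hz hl hr] at hjump
    field_simp at hjump ⊢
    linarith
  refine ⟨fun x hx => pos_of_sinh_pieces hs hl hr (by rw [huz]; positivity) hx, ?_⟩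
  rw [integral_of_sinh_pieces hs.ne' hz hl hr, huz, hμs, sinh_eq_sinh_mul_add_mul_one_sub s z]
  field_simp
  ring

/-- For the solution `u` of the elliptic interface problem `u'' = μu` on
`(0,z) ∪ (z,1)`, `u(0) = u(1) = 0`, jump `u'(z⁺) - u'(z⁻) = -λ` with `λ > 0`:
`u` is strictly positive on `(0,1)` and
`∫₀¹ u = (λ/μ)(1 - (sinh(√μ z) + sinh(√μ(1-z)))/sinh(√μ))`. -/
theorem stmt10 (μ lam z : ℝ) (hμ : 0 < μ) (hlam : 0 < lam)
    (hz : z ∈ Set.Ioo (0:ℝ) 1)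
    (u : ℝ → ℝ)
    (hc : ContinuousOn u (Set.Icc 0 1))
    (hC2l : ContDiffOn ℝ 2 u (Set.Icc 0 z))
    (hC2r : ContDiffOn ℝ 2 u (Set.Icc z 1))
    (hode1 : ∀ x ∈ Set.Ioo 0 z, deriv (deriv u) x - μ * u x = 0)
    (hode2 : ∀ x ∈ Set.Ioo z 1, deriv (deriv u) x - μ * u x = 0)
    (hb0 : u 0 = 0) (hb1 : u 1 = 0)
    (hjump : derivWithin u (Set.Ici z) z - derivWithin u (Set.Iic z) z = -lam) :
    (∀ x ∈ Set.Ioo (0:ℝ) 1, 0 < u x) ∧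
    ∫ x in (0:ℝ)..1, u x =
      (lam / μ) * (1 - (Real.sinh (Real.sqrt μ * z) + Real.sinh (Real.sqrt μ * (1 - z))) /
        Real.sinh (Real.sqrt μ)) :=
  stmt10_general μ lam z hμ hlam hz u hC2l hC2r hode1 hode2 hb0 hb1 hjump
end

section
/- Let U: ℝ × ℝ → ℝ be differentiable and define u(x) = U(x, |x − z|) for a fixed z ∈ ℝ. Then u is continuous at z, and if ∂_φ U(z, 0) = 0 then u is differentiable at z with u'(z) = ∂_x U(z, 0). More generally, the one-sided derivatives satisfy u'(z⁺) − u'(z⁻) = 2 ∂_φ U(z, 0). -/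
open Set

/-!
Write `L` for the Fréchet derivative of `(x, φ) ↦ U x φ` at `(z, 0)`. On each half-line the cusp
`x ↦ |x - z|` is smooth with slope `σ = ±1`, so by the chain rule the one-sided derivatives of
`u` at `z` are `L (1, σ) = ∂ₓU(z, 0) + σ ∂_φU(z, 0)`. Their difference is `2 ∂_φU(z, 0)`, and when
`∂_φU(z, 0) = 0` they agree, so `u` is differentiable at `z`.
-/

lemma hasDerivWithinAt_abs_sub_Ici (z : ℝ) : HasDerivWithinAt (fun x => |x - z|) 1 (Ici z) z :=
  ((hasDerivAt_id z).sub_const z).hasDerivWithinAt.congr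
    (fun _ hx => abs_of_nonneg (sub_nonneg.2 hx)) (by simp)

lemma hasDerivWithinAt_abs_sub_Iic (z : ℝ) : HasDerivWithinAt (fun x => |x - z|) (-1) (Iic z) z :=
  ((hasDerivAt_id' z).const_sub z).hasDerivWithinAt.congr
    (fun x hx => by rw [abs_of_nonpos (sub_nonpos.2 (mem_Iic.1 hx)), neg_sub]) (by simp)

section

variable {E : Type*} [NormedAddCommGroup E] [NormedSpace ℝ E]

lemma ContinuousLinearMap.apply_one_prod (L : ℝ × ℝ →L[ℝ] E) (σ : ℝ) :
    L (1, σ) = L (1, 0) + σ • L (0, 1) := by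
  rw [← L.map_smul, ← L.map_add]
  simp

variable {F : ℝ × ℝ → E} {L : ℝ × ℝ →L[ℝ] E}

lemma HasFDerivAt.hasDerivAt_partial_fst {x y : ℝ} (hF : HasFDerivAt F L (x, y)) :
    HasDerivAt (fun t => F (t, y)) (L (1, 0)) x :=
  hF.comp_hasDerivAt x ((hasDerivAt_id x).prodMk (hasDerivAt_const x y))

lemma HasFDerivAt.hasDerivAt_partial_snd {x y : ℝ} (hF : HasFDerivAt F L (x, y)) :
    HasDerivAt (fun t => F (x, t)) (L (0, 1)) y :=
  hF.comp_hasDerivAt y ((hasDerivAt_const y x).prodMk (hasDerivAt_id y))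

lemma HasFDerivAt.hasDerivWithinAt_comp_abs_sub {z σ : ℝ} {s : Set ℝ}
    (hF : HasFDerivAt F L (z, 0)) (hs : HasDerivWithinAt (fun x => |x - z|) σ s z) :
    HasDerivWithinAt (fun x => F (x, |x - z|)) (L (1, σ)) s z :=
  hF.comp_hasDerivWithinAt_of_eq z ((hasDerivWithinAt_id z s).prodMk hs) (by simp)

end

/-- Cusp-capturing ansatz: for differentiable `U : ℝ × ℝ → ℝ` and `u(x) = U(x,|x-z|)`,
`u` is continuous at `z`; if `∂_φ U(z,0) = 0` then `u` is differentiable at `z` with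
`u'(z) = ∂_x U(z,0)`; and in general the one-sided derivatives satisfy
`u'(z⁺) - u'(z⁻) = 2 ∂_φ U(z,0)`. -/
theorem stmt11 (U : ℝ → ℝ → ℝ) (z : ℝ)
    (hU : Differentiable ℝ (fun p : ℝ × ℝ => U p.1 p.2))
    (u : ℝ → ℝ) (hu : ∀ x : ℝ, u x = U x |x - z|) :
    ContinuousAt u z ∧
    (deriv (fun φ => U z φ) 0 = 0 →
      HasDerivAt u (deriv (fun x => U x 0) z) z) ∧
    derivWithin u (Set.Ici z) z - derivWithin u (Set.Iic z) z =
      2 * deriv (fun φ => U z φ) 0 := by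
  obtain rfl : u = fun x => U x |x - z| := funext hu
  have hF := (hU (z, 0)).hasFDerivAt
  set L := fderiv ℝ (fun p : ℝ × ℝ => U p.1 p.2) (z, 0)
  have hright := hF.hasDerivWithinAt_comp_abs_sub (hasDerivWithinAt_abs_sub_Ici z)
  have hleft := hF.hasDerivWithinAt_comp_abs_sub (hasDerivWithinAt_abs_sub_Iic z)
  rw [L.apply_one_prod] at hright hleft
  rw [hF.hasDerivAt_partial_fst.deriv, hF.hasDerivAt_partial_snd.deriv]
  refine ⟨(hU.continuous.comp (by fun_prop : Continuous fun x : ℝ => (x, |x - z|))).continuousAt,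
    fun hφ => ?_, ?_⟩
  · rw [hφ, smul_zero, add_zero] at hleft hright
    exact hasDerivWithinAt_univ.1 (by simpa only [Iic_union_Ici] using hleft.union hright)
  · rw [hright.derivWithin (uniqueDiffOn_Ici z z self_mem_Ici),
      hleft.derivWithin (uniqueDiffOn_Iic z z self_mem_Iic)]
    simp only [smul_eq_mul]
    ring
end
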